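/- arXiv:2605.04301 — 5 statements merged into one kernel-verified Lean document; each statement's English description precedes it below -/
import Mathlib

section
/- If p = (p₀,...,p_m), p̃ = (p̃₀,...,p̃_m) ∈ ℂ^{m+1} with p₀ = p̃₀ ≠ 0, and U is an (m+1)×(m+1) matrix with u_{0,j} = u_{i,0} = 1 for all i,j, satisfying diag(p)·U·diag(p̃)·Uᵗ = p₀·I, then Σᵢ pᵢ = 1 and Σᵢ p̃ᵢ = 1. -/
open Matrix

/-- If `p₀ = p̃₀ ≠ 0`, the first row and column of `U` are all ones, and
`diag(p)·U·diag(p̃)·Uᵗ = p₀·I`, then `Σᵢ pᵢ = 1` and `Σᵢ p̃ᵢ = 1`. -/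
theorem sum_p_eq_one (m : ℕ) (p pt : Fin (m+1) → ℂ)
    (h00 : p 0 = pt 0) (h0 : p 0 ≠ 0)
    (U : Matrix (Fin (m+1)) (Fin (m+1)) ℂ)
    (hrow : ∀ j, U 0 j = 1) (hcol : ∀ i, U i 0 = 1)
    (hU : diagonal p * U * diagonal pt * Uᵀ
        = p 0 • (1 : Matrix (Fin (m+1)) (Fin (m+1)) ℂ)) :
    (∑ i, p i) = 1 ∧ (∑ i, pt i) = 1 := by
  set A := diagonal p * U with hA
  set B := diagonal pt * Uᵀ with hB
  have hAB : A * B = p 0 • 1 := by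
    rw [hA, hB, ← mul_assoc]; exact hU
  -- pt sum from (0,0) entry of hAB
  have hptsum : (∑ i, pt i) = 1 := by
    have := congrFun (congrFun hAB 0) 0
    simp only [hA, hB, mul_apply, diagonal_apply, transpose_apply, Matrix.smul_apply,
      one_apply_eq, smul_eq_mul, mul_one] at this
    simp only [ite_mul, zero_mul, Finset.sum_ite_eq, Finset.mem_univ, if_true,
      hrow, hcol, one_mul, mul_one] at this
    rw [← Finset.mul_sum] at this
    field_simp at this
    exact this
  -- B * A = p 0 • 1
  have h1 : A * ((p 0)⁻¹ • B) = 1 := by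
    rw [mul_smul_comm, hAB, smul_smul, inv_mul_cancel₀ h0, one_smul]
  have h2 : ((p 0)⁻¹ • B) * A = 1 := mul_eq_one_comm.mp h1
  have hBA : B * A = p 0 • 1 := by
    have : p 0 • (((p 0)⁻¹ • B) * A) = p 0 • (1 : Matrix (Fin (m+1)) (Fin (m+1)) ℂ) := by
      rw [h2]
    rwa [smul_mul_assoc, smul_smul, mul_inv_cancel₀ h0, one_smul] at this
  have hpsum : (∑ i, p i) = 1 := by
    have := congrFun (congrFun hBA 0) 0
    simp only [hA, hB, mul_apply, diagonal_apply, transpose_apply, Matrix.smul_apply,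
      one_apply_eq, smul_eq_mul, mul_one] at this
    simp only [ite_mul, zero_mul, Finset.sum_ite_eq, Finset.mem_univ, if_true,
      hrow, hcol, one_mul, mul_one] at this
    rw [← Finset.mul_sum, ← h00] at this
    field_simp at this
    exact this
  exact ⟨hpsum, hptsum⟩
end

section
/- Let g act on the polynomial superalgebra 𝔓 = ℂ[x₀,...,x_m] ⊗ Λ[ξ₀,...,ξ_n] via ρ(E_{i,j}) = wᵢ∂ⱼ, where wᵢ = xᵢ for i ≤ m and w_{m+1+j} = ξⱼ. Then each space 𝔓^D of total-degree-D elements is an irreducible g-submodule, and 𝔓 = ⊕_{D∈ℕ} 𝔓^D as g-modules. -/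
/-- Index set of the variables `w₀,…,w_{m+n+1}`: evens `xᵢ` then odds `ξⱼ`. -/
abbrev Idx (m n : ℕ) := Fin (m+1) ⊕ Fin (n+1)

/-- Valid exponents of monomials `x^α ξ^ε`: the odd exponents are at most 1. -/
def ValidExp (m n : ℕ) := {μ : Idx m n → ℕ // ∀ b : Fin (n+1), μ (Sum.inr b) ≤ 1}

/-- The supersymmetric polynomial algebra `𝔓 = ℂ[x] ⊗ Λ[ξ]`, as the free
module on its monomial basis. -/
abbrev SuperPoly (m n : ℕ) := ValidExp m n →₀ ℂ

/-- The sign `(-1)^{s_b(ε)}` picked up at an odd index, `1` at an even index. -/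
noncomputable def sgnAt {m n : ℕ} (i : Idx m n) (μ : Idx m n → ℕ) : ℂ :=
  match i with
  | Sum.inl _ => 1
  | Sum.inr b => (-1) ^ (∑ l ∈ Finset.univ.filter (· < b), μ (Sum.inr l))

/-- Action of `ρ(E_{i,j}) = wᵢ∂ⱼ` on the basis monomial `w^μ`, from the graded
Leibniz rule: coefficient `μⱼ`, sign `s_j` then `s_i` of the intermediate
exponent, and zero whenever an odd exponent would reach 2. -/
noncomputable def gAct {m n : ℕ} (i j : Idx m n) (μ : ValidExp m n) :
    SuperPoly m n :=
  let ν : Idx m n → ℕ :=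
    fun k => (μ.1 k - (if k = j then 1 else 0)) + (if k = i then 1 else 0)
  if h : ∀ b : Fin (n+1), ν (Sum.inr b) ≤ 1 then
    ((μ.1 j : ℂ) * sgnAt j μ.1 *
        sgnAt i (fun k => μ.1 k - (if k = j then 1 else 0))) •
      Finsupp.single ⟨ν, h⟩ 1
  else 0

/-- The operator `ρ(E_{i,j})` on `𝔓`. -/
noncomputable def rho {m n : ℕ} (i j : Idx m n) :
    SuperPoly m n →ₗ[ℂ] SuperPoly m n :=
  Finsupp.linearCombination ℂ (gAct i j)

/-- `𝔓^D`: the span of the monomials of total degree `D`. -/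
noncomputable def PD (m n : ℕ) (D : ℕ) : Submodule ℂ (SuperPoly m n) :=
  Submodule.span ℂ
    {p | ∃ μ : ValidExp m n, (∑ k, μ.1 k) = D ∧ p = Finsupp.single μ 1}

namespace SP
variable {m n : ℕ}

def deg (μ : ValidExp m n) : ℕ := ∑ k, μ.1 k

lemma sgnAt_ne_zero (i : Idx m n) (μ : Idx m n → ℕ) : sgnAt i μ ≠ 0 := by
  cases i <;> simp [sgnAt]

lemma rho_single (i j : Idx m n) (μ : ValidExp m n) :
    rho i j (Finsupp.single μ 1) = gAct i j μ := by
  simp [rho, Finsupp.linearCombination_single]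

lemma sum_delta (i : Idx m n) : (∑ k : Idx m n, (if k = i then 1 else 0)) = 1 := by
  simp

lemma gAct_diag (i : Idx m n) (μ : ValidExp m n) :
    gAct i i μ = (μ.1 i : ℂ) • Finsupp.single μ 1 := by
  by_cases hμ : μ.1 i = 0
  · unfold gAct
    simp only []
    split <;> simp [hμ]
  · have hν : (fun k => (μ.1 k - (if k = i then 1 else 0)) + (if k = i then 1 else 0)) = μ.1 := by
      funext k
      by_cases hk : k = i <;> simp [hk] <;> omega
    have hsgn : sgnAt i (fun k => μ.1 k - (if k = i then 1 else 0)) = sgnAt i μ.1 := by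
      cases i with
      | inl a => simp [sgnAt]
      | inr b =>
        simp only [sgnAt]
        congr 1
        refine Finset.sum_congr rfl fun l hl => ?_
        simp only [Finset.mem_filter] at hl
        have : (Sum.inr l : Idx m n) ≠ Sum.inr b := by
          simp only [ne_eq, Sum.inr.injEq]
          exact fun h => absurd (h ▸ hl.2) (lt_irrefl b)
        simp [this]
    have hsq : sgnAt i μ.1 * sgnAt i μ.1 = 1 := by
      cases i with
      | inl a => simp [sgnAt]
      | inr b =>
        simp only [sgnAt, ← pow_add]
        exact Even.neg_one_pow ⟨_, rfl⟩
    unfold gAct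
    rw [dif_pos (by rw [hν]; exact μ.2)]
    rw [hsgn]
    have : (⟨_, (hν ▸ μ.2 : _)⟩ : ValidExp m n) = μ := Subtype.ext hν
    rw [this]
    rw [mul_assoc, hsq, mul_one]

lemma rho_diag_apply (k : Idx m n) (p : SuperPoly m n) (μ : ValidExp m n) :
    (rho k k p) μ = (μ.1 k : ℂ) * p μ := by
  induction p using Finsupp.induction_linear with
  | zero => simp
  | add f g hf hg => simp [map_add, hf, hg, mul_add]
  | single a b =>
    have : rho k k (Finsupp.single a b) = Finsupp.single a (b * (a.1 k : ℂ)) := by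
      rw [rho]
      rw [Finsupp.linearCombination_single, gAct_diag]
      rw [smul_smul, Finsupp.smul_single, smul_eq_mul, mul_one]
    classical
    rw [this, Finsupp.single_apply, Finsupp.single_apply]
    by_cases h : a = μ
    · subst h; simp [mul_comm]
    · simp [h]

lemma extract (N : Submodule ℂ (SuperPoly m n))
    (hN : ∀ i j : Idx m n, ∀ p ∈ N, rho i j p ∈ N) :
    ∀ s : ℕ, ∀ p ∈ N, p.support.card ≤ s → ∀ μ ∈ p.support,
      Finsupp.single μ (1:ℂ) ∈ N := by
  classical
  intro s
  induction s with
  | zero =>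
    intro p _ hc μ hμ
    rw [Nat.le_zero, Finset.card_eq_zero] at hc
    rw [hc] at hμ; exact absurd hμ (Finset.notMem_empty μ)
  | succ s ih =>
    intro p hp hc μ hμ
    by_cases hall : ∀ μ' ∈ p.support, μ' = μ
    · have hpμ : p μ ≠ 0 := Finsupp.mem_support_iff.1 hμ
      classical
      have hps : p = Finsupp.single μ (p μ) := by
        ext ν
        rw [Finsupp.single_apply]
        by_cases hν : ν ∈ p.support
        · have := hall ν hν; subst this; simp
        · rw [Finsupp.notMem_support_iff] at hν
          rw [hν]
          by_cases h : μ = ν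
          · subst h; exact absurd hν hpμ
          · simp [h]
      have h2 : (p μ)⁻¹ • Finsupp.single μ (p μ) = Finsupp.single μ (1:ℂ) := by
        rw [Finsupp.smul_single, smul_eq_mul, inv_mul_cancel₀ hpμ]
      have hmem : (p μ)⁻¹ • p ∈ N := N.smul_mem _ hp
      rw [hps] at hmem
      simp only [Finsupp.single_eq_same] at hmem
      rw [h2] at hmem
      exact hmem
    · push_neg at hall
      obtain ⟨μ', hμ's, hne⟩ := hall
      have hkex : ∃ k, μ.1 k ≠ μ'.1 k := by
        by_contra h
        push_neg at h
        exact hne (Subtype.ext (funext fun k => (h k).symm))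
      obtain ⟨k, hk⟩ := hkex
      set q : SuperPoly m n := rho k k p - (μ'.1 k : ℂ) • p with hqdef
      have hqN : q ∈ N := N.sub_mem (hN k k p hp) (N.smul_mem _ hp)
      have hqval : ∀ ν : ValidExp m n, q ν = ((ν.1 k : ℂ) - μ'.1 k) * p ν := by
        intro ν
        rw [hqdef, Finsupp.sub_apply, Finsupp.smul_apply, rho_diag_apply, smul_eq_mul]
        ring
      have hsub : q.support ⊆ p.support := by
        intro ν hν
        rw [Finsupp.mem_support_iff] at hν ⊢
        intro h0
        exact hν (by rw [hqval, h0, mul_zero])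
      have hμ'q : μ' ∉ q.support := by
        rw [Finsupp.notMem_support_iff, hqval, sub_self, zero_mul]
      have hμq : μ ∈ q.support := by
        rw [Finsupp.mem_support_iff, hqval]
        exact mul_ne_zero (sub_ne_zero.2 (by exact_mod_cast hk))
          (Finsupp.mem_support_iff.1 hμ)
      have hcard : q.support.card ≤ s := by
        have h1 : q.support ⊆ p.support.erase μ' :=
          fun ν hν => Finset.mem_erase.2 ⟨fun h => hμ'q (h ▸ hν), hsub hν⟩
        have h2 := Finset.card_le_card h1
        have h3 := Finset.card_erase_of_mem hμ's
        omega
      exact ih q hqN hcard μ hμq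

lemma deg_move (i j : Idx m n) (μ : ValidExp m n) (hj : 1 ≤ μ.1 j)
    (h : ∀ b : Fin (n+1),
      (μ.1 (Sum.inr b) - (if (Sum.inr b : Idx m n) = j then 1 else 0)) +
        (if (Sum.inr b : Idx m n) = i then 1 else 0) ≤ 1) :
    deg (⟨fun k => (μ.1 k - (if k = j then 1 else 0)) + (if k = i then 1 else 0), h⟩ :
      ValidExp m n) = deg μ := by
  unfold deg
  simp only
  rw [Finset.sum_add_distrib, sum_delta]
  have : (∑ k : Idx m n, (μ.1 k - if k = j then 1 else 0)) = (∑ k : Idx m n, μ.1 k) - 1 := by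
    have h1 : (∑ k : Idx m n, μ.1 k) =
        ∑ k : Idx m n, ((μ.1 k - if k = j then 1 else 0) + if k = j then 1 else 0) := by
      refine Finset.sum_congr rfl fun k _ => ?_
      by_cases hk : k = j
      · subst hk; simp; omega
      · simp [hk]
    rw [h1, Finset.sum_add_distrib, sum_delta]
    omega
  rw [this]
  have : 1 ≤ ∑ k : Idx m n, μ.1 k :=
    le_trans hj (Finset.single_le_sum (fun k _ => Nat.zero_le _) (Finset.mem_univ j))
  omega

lemma gAct_move (i j : Idx m n) (μ : ValidExp m n)
    (h : ∀ b : Fin (n+1),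
      (μ.1 (Sum.inr b) - (if (Sum.inr b : Idx m n) = j then 1 else 0)) +
        (if (Sum.inr b : Idx m n) = i then 1 else 0) ≤ 1) :
    ∃ c : ℂ, (μ.1 j ≠ 0 → c ≠ 0) ∧ gAct i j μ =
      c • Finsupp.single
        (⟨fun k => (μ.1 k - (if k = j then 1 else 0)) + (if k = i then 1 else 0), h⟩ :
          ValidExp m n) 1 := by
  refine ⟨(μ.1 j : ℂ) * sgnAt j μ.1 * sgnAt i (fun k => μ.1 k - (if k = j then 1 else 0)),
    fun hj => ?_, ?_⟩
  · exact mul_ne_zero (mul_ne_zero (Nat.cast_ne_zero.2 hj) (sgnAt_ne_zero _ _))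
      (sgnAt_ne_zero _ _)
  · unfold gAct
    rw [dif_pos h]
    rfl

lemma reach (N : Submodule ℂ (SuperPoly m n))
    (hN : ∀ i j : Idx m n, ∀ p ∈ N, rho i j p ∈ N) :
    ∀ d : ℕ, ∀ μ μ' : ValidExp m n, (∑ k, (μ'.1 k - μ.1 k)) ≤ d →
      deg μ = deg μ' → Finsupp.single μ (1:ℂ) ∈ N → Finsupp.single μ' (1:ℂ) ∈ N := by
  intro d
  induction d with
  | zero =>
    intro μ μ' hd hdeg hμ
    have hle : ∀ k : Idx m n, μ'.1 k ≤ μ.1 k := by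
      intro k
      have := Finset.sum_eq_zero_iff.1 (Nat.le_zero.1 hd) k (Finset.mem_univ k)
      omega
    have : μ' = μ := by
      refine Subtype.ext (funext fun k => ?_)
      have := (Finset.sum_eq_sum_iff_of_le (fun k _ => hle k)).1 ?_ k (Finset.mem_univ k)
      · omega
      · exact hdeg.symm
    rw [this]; exact hμ
  | succ d ih =>
    intro μ μ' hd hdeg hμ
    by_cases hle : ∀ k : Idx m n, μ'.1 k ≤ μ.1 k
    · have : μ' = μ := by
        refine Subtype.ext (funext fun k => ?_)
        have := (Finset.sum_eq_sum_iff_of_le (fun k _ => hle k)).1 hdeg.symm k (Finset.mem_univ k)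
        omega
      rw [this]; exact hμ
    · push_neg at hle
      obtain ⟨i, hi⟩ := hle
      have hjex : ∃ j : Idx m n, μ'.1 j < μ.1 j := by
        by_contra hc
        push_neg at hc
        have : deg μ < deg μ' :=
          Finset.sum_lt_sum (fun k _ => hc k) ⟨i, Finset.mem_univ i, hi⟩
        omega
      obtain ⟨j, hj⟩ := hjex
      have hij : i ≠ j := fun h => by subst h; omega
      have hval : ∀ b : Fin (n+1),
          (μ.1 (Sum.inr b) - (if (Sum.inr b : Idx m n) = j then 1 else 0)) +
            (if (Sum.inr b : Idx m n) = i then 1 else 0) ≤ 1 := by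
        intro b
        have h1 := μ.2 b
        have h2 := μ'.2 b
        by_cases hbi : (Sum.inr b : Idx m n) = i
        · subst hbi
          simp only [if_neg hij]
          simp only [if_pos rfl, if_true, eq_self_iff_true]
          omega
        · rw [if_neg hbi]
          split <;> omega
      set ν : ValidExp m n :=
        ⟨fun k => (μ.1 k - (if k = j then 1 else 0)) + (if k = i then 1 else 0), hval⟩ with hν
      obtain ⟨c, hc0, hgact⟩ := gAct_move i j μ hval
      have hc0' : c ≠ 0 := hc0 (by omega)
      have hνN : Finsupp.single ν (1:ℂ) ∈ N := by
        have h1 : rho i j (Finsupp.single μ 1) ∈ N := hN i j _ hμ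
        rw [rho_single, hgact] at h1
        have h2 := N.smul_mem c⁻¹ h1
        replace h2 : c⁻¹ • c • (Finsupp.single ν (1:ℂ) : SuperPoly m n) ∈ N := h2
        rw [inv_smul_smul₀ hc0'] at h2
        exact h2
      refine ih ν μ' ?_ ?_ hνN
      · have key : ∀ k : Idx m n,
            (μ'.1 k - ν.1 k) + (if k = i then 1 else 0) = μ'.1 k - μ.1 k := by
          intro k
          show (μ'.1 k - ((μ.1 k - if k = j then 1 else 0) + if k = i then 1 else 0))
              + (if k = i then 1 else 0) = μ'.1 k - μ.1 k
          by_cases hki : k = i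
          · subst hki
            simp only [if_neg hij]
            simp only [if_pos rfl, if_true, eq_self_iff_true]
            omega
          · rw [if_neg hki]
            by_cases hkj : k = j
            · subst hkj
              rw [if_pos rfl]
              omega
            · rw [if_neg hkj]
              omega
        have hsum : (∑ k : Idx m n, ((μ'.1 k - ν.1 k) + (if k = i then 1 else 0)))
            = ∑ k : Idx m n, (μ'.1 k - μ.1 k) :=
          Finset.sum_congr rfl fun k _ => key k
        rw [Finset.sum_add_distrib, sum_delta] at hsum
        omega
      · rw [hν]
        rw [deg_move i j μ (by omega) hval]
        exact hdeg

lemma PD_eq_supported (D : ℕ) :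
    PD m n D = Finsupp.supported ℂ ℂ {μ : ValidExp m n | deg μ = D} := by
  rw [Finsupp.supported_eq_span_single]
  unfold PD
  congr 1
  ext p
  constructor
  · rintro ⟨μ, hμ, rfl⟩
    exact ⟨μ, hμ, rfl⟩
  · rintro ⟨μ, hμ, rfl⟩
    exact ⟨μ, hμ, rfl⟩

lemma gAct_mem (i j : Idx m n) (D : ℕ) (μ : ValidExp m n) (hμ : deg μ = D) :
    gAct i j μ ∈ PD m n D := by
  unfold gAct
  simp only []
  split
  case isTrue h =>
    by_cases hj : μ.1 j = 0
    · rw [hj]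
      simp only [Nat.cast_zero, zero_mul]
      rw [zero_smul]
      exact (PD m n D).zero_mem
    · refine Submodule.smul_mem _ _ (Submodule.subset_span ⟨⟨_, h⟩, ?_, rfl⟩)
      exact (deg_move i j μ (Nat.one_le_iff_ne_zero.2 hj) h).trans hμ
  case isFalse h => exact (PD m n D).zero_mem

end SP

open SP

/-- Each `𝔓^D` is a `gl(m+1|n+1)`-submodule, `𝔓 = ⊕_D 𝔓^D`, and each `𝔓^D` is
irreducible: any invariant submodule of `𝔓^D` is `⊥` or all of `𝔓^D`. -/
theorem superPoly_decomposition (m n : ℕ) :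
    (∀ (i j : Idx m n) (D : ℕ), ∀ p ∈ PD m n D, rho i j p ∈ PD m n D) ∧
    iSupIndep (PD m n) ∧
    (⨆ D, PD m n D) = ⊤ ∧
    (∀ D : ℕ, ∀ N : Submodule ℂ (SuperPoly m n),
      N ≤ PD m n D → (∀ i j : Idx m n, ∀ p ∈ N, rho i j p ∈ N) →
      N = ⊥ ∨ N = PD m n D) := by
  refine ⟨?_, ?_, ?_, ?_⟩
  · intro i j D p hp
    have hle : PD m n D ≤ Submodule.comap (rho i j) (PD m n D) := by
      unfold PD
      rw [Submodule.span_le]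
      rintro q ⟨μ, hμ, rfl⟩
      simp only [SetLike.mem_coe, Submodule.mem_comap]
      rw [rho_single]
      show gAct i j μ ∈ PD m n D
      exact gAct_mem i j D μ hμ
    exact hle hp
  · rw [iSupIndep_def]
    intro D
    rw [PD_eq_supported]
    refine Disjoint.mono_right ?_
      (Finsupp.disjoint_supported_supported
        (disjoint_compl_right (a := {μ : ValidExp m n | deg μ = D})))
    refine iSup_le fun D' => iSup_le fun hD' => ?_
    rw [PD_eq_supported]
    refine Finsupp.supported_mono ?_
    intro μ hμ
    intro hcontra
    exact hD' ((hμ : deg μ = D').symm.trans hcontra)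
  · rw [eq_top_iff, ← Finsupp.supported_univ (M := ℂ) (R := ℂ),
      Finsupp.supported_eq_span_single, Submodule.span_le]
    rintro q ⟨μ, -, rfl⟩
    exact le_iSup (PD m n) (deg μ) (Submodule.subset_span ⟨μ, rfl, rfl⟩)
  · intro D N hle hinv
    by_cases hbot : N = ⊥
    · exact Or.inl hbot
    · right
      obtain ⟨p, hpN, hp0⟩ := (Submodule.ne_bot_iff N).1 hbot
      obtain ⟨μ, hμ⟩ := Finsupp.support_nonempty_iff.2 hp0
      have hsing : Finsupp.single μ (1:ℂ) ∈ N :=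
        extract N hinv p.support.card p hpN le_rfl μ hμ
      have hdegμ : deg μ = D := by
        have h1 := hle hpN
        rw [PD_eq_supported] at h1
        exact (Finsupp.mem_supported ℂ p).1 h1 hμ
      refine le_antisymm hle ?_
      unfold PD
      rw [Submodule.span_le]
      rintro q ⟨μ', hμ', rfl⟩
      have hD' : deg μ' = D := hμ'
      exact reach N hinv (∑ k, (μ'.1 k - μ.1 k)) μ μ' le_rfl
        (hdegμ.trans hD'.symm) hsing
end

section
/- Define the bilinear form on spanned-by-monomials ⟨x^α ξ^ε, x^β ξ^η⟩ = δ_{α,β} δ_{ε,η} (α!/(p̃^α q̃^ε)) θ^{|α|} κ^{|ε|}. Then for the odd-odd generator D_{i,j} (i ≠ j, acting as ξᵢ∂_{ξⱼ}) and monomials with εᵢ = 0, εⱼ = 1: ⟨D_{i,j}·x^α ξ^ε, x^α ξ^{ε+v_i−v_j}⟩ = (q̃_j/q̃_i)·⟨x^α ξ^ε, D_{j,i}·x^α ξ^{ε+v_i−v_j}⟩. -/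
/-- The weight `α!/(p̃^α q̃^ε) · θ^{|α|} κ^{|ε|}` of a monomial. -/
noncomputable def wt {m n : ℕ} (pt : Fin (m+1) → ℂ) (qt : Fin (n+1) → ℂ)
    (θ κ : ℂ) (μ : ValidExp m n) : ℂ :=
  (∏ a, ((μ.1 (Sum.inl a)).factorial : ℂ)) /
      ((∏ a, pt a ^ μ.1 (Sum.inl a)) * (∏ b, qt b ^ μ.1 (Sum.inr b))) *
    θ ^ (∑ a, μ.1 (Sum.inl a)) * κ ^ (∑ b, μ.1 (Sum.inr b))

/-- The bilinear form, diagonal on monomials: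
`⟨x^α ξ^ε, x^β ξ^η⟩ = δ δ (α!/(p̃^α q̃^ε)) θ^{|α|} κ^{|ε|}`. -/
noncomputable def form {m n : ℕ} (pt : Fin (m+1) → ℂ) (qt : Fin (n+1) → ℂ)
    (θ κ : ℂ) (f g : SuperPoly m n) : ℂ :=
  f.sum fun μ c => c * g μ * wt pt qt θ κ μ

lemma prod_split {M : Type*} [CommMonoid M] {k : ℕ} (i j : Fin k) (hij : i ≠ j)
    (f : Fin k → M) :
    ∏ b, f b = f i * (f j * ∏ b ∈ (Finset.univ.erase i).erase j, f b) := by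
  rw [Finset.mul_prod_erase _ f (by simp [Ne.symm hij] : j ∈ Finset.univ.erase i),
    Finset.mul_prod_erase _ f (Finset.mem_univ i)]

lemma sum_split {k : ℕ} (i j : Fin k) (hij : i ≠ j) (f : Fin k → ℕ) :
    ∑ b, f b = f i + (f j + ∑ b ∈ (Finset.univ.erase i).erase j, f b) := by
  rw [Finset.add_sum_erase _ f (by simp [Ne.symm hij] : j ∈ Finset.univ.erase i),
    Finset.add_sum_erase _ f (Finset.mem_univ i)]

lemma gAct_eq {m n : ℕ} (i j : Idx m n) (μ ν : ValidExp m n)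
    (h : ∀ k, ν.1 k = (μ.1 k - (if k = j then 1 else 0)) + (if k = i then 1 else 0)) :
    gAct i j μ = ((μ.1 j : ℂ) * sgnAt j μ.1 *
        sgnAt i (fun k => μ.1 k - (if k = j then 1 else 0))) • Finsupp.single ν 1 := by
  have hfun : (fun k => (μ.1 k - (if k = j then 1 else 0)) + (if k = i then 1 else 0)) = ν.1 :=
    funext fun k => (h k).symm
  unfold gAct
  rw [dif_pos (by intro b; rw [hfun]; exact ν.2 b)]
  congr 1
  congr 1
  apply Subtype.ext
  exact hfun

lemma form_smul_single {m n : ℕ} (pt : Fin (m+1) → ℂ) (qt : Fin (n+1) → ℂ)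
    (θ κ c : ℂ) (ν : ValidExp m n) :
    form pt qt θ κ (c • Finsupp.single ν 1) (Finsupp.single ν 1)
      = c * wt pt qt θ κ ν := by
  rw [Finsupp.smul_single, smul_eq_mul, mul_one]
  unfold form
  rw [Finsupp.sum_single_index (by simp)]
  rw [Finsupp.single_eq_same, mul_one]

lemma form_single_smul {m n : ℕ} (pt : Fin (m+1) → ℂ) (qt : Fin (n+1) → ℂ)
    (θ κ c : ℂ) (ν : ValidExp m n) :
    form pt qt θ κ (Finsupp.single ν 1) (c • Finsupp.single ν 1)
      = c * wt pt qt θ κ ν := by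
  rw [Finsupp.smul_single, smul_eq_mul, mul_one]
  unfold form
  rw [Finsupp.sum_single_index (by simp)]
  rw [Finsupp.single_eq_same, one_mul]

lemma final_step (F P R θs κt qi qj : ℂ) (hqi : qi ≠ 0) (hqj : qj ≠ 0) :
    F / (P * (qi * R)) * θs * κt = qj / qi * (F / (P * (qj * R)) * θs * κt) := by
  rcases eq_or_ne P 0 with h | h
  · simp [h]
  rcases eq_or_ne R 0 with h2 | h2
  · simp [h2]
  field_simp

/-- Contravariance for the odd-odd generator `D_{i,j}` (acting as `ξᵢ∂_{ξⱼ}`):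
for `i ≠ j`, `εᵢ = 0`, `εⱼ = 1`,
`⟨D_{i,j}·x^α ξ^ε, x^α ξ^{ε+vᵢ−vⱼ}⟩ = (q̃ⱼ/q̃ᵢ)·⟨x^α ξ^ε, D_{j,i}·x^α ξ^{ε+vᵢ−vⱼ}⟩`. -/
theorem form_contravariance (m n : ℕ)
    (pt : Fin (m+1) → ℂ) (qt : Fin (n+1) → ℂ) (θ κ : ℂ)
    (hpt : ∀ a, pt a ≠ 0) (hqt : ∀ b, qt b ≠ 0) (hθ : θ ≠ 0) (hκ : κ ≠ 0)
    (i j : Fin (n+1)) (hij : i ≠ j)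
    (μ μ' : ValidExp m n)
    (hi : μ.1 (Sum.inr i) = 0) (hj : μ.1 (Sum.inr j) = 1)
    (hμ' : ∀ k, μ'.1 k
        = (μ.1 k - (if k = Sum.inr j then 1 else 0))
            + (if k = Sum.inr i then 1 else 0)) :
    form pt qt θ κ (rho (Sum.inr i) (Sum.inr j) (Finsupp.single μ 1))
        (Finsupp.single μ' 1)
      = (qt j / qt i) *
          form pt qt θ κ (Finsupp.single μ 1)
            (rho (Sum.inr j) (Sum.inr i) (Finsupp.single μ' 1)) := by
  classical
  have hinj : (Sum.inr i : Idx m n) ≠ Sum.inr j := fun h => hij (Sum.inr.inj h)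
  have hii : μ'.1 (Sum.inr i) = 1 := by
    rw [hμ']; simp [hi, hij]
  have hjj : μ'.1 (Sum.inr j) = 0 := by
    rw [hμ']; simp [hj, Ne.symm hij]
  have hR : ∀ k, μ.1 k
      = (μ'.1 k - (if k = Sum.inr i then 1 else 0)) + (if k = Sum.inr j then 1 else 0) := by
    intro k
    by_cases hki : k = Sum.inr i
    · subst hki; rw [hii, hi]; simp [hij]
    · by_cases hkj : k = Sum.inr j
      · subst hkj; rw [hjj, hj]; simp [Ne.symm hij]
      · rw [hμ' k]; simp [hki, hkj]
  have hLact : rho (Sum.inr i) (Sum.inr j) (Finsupp.single μ 1)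
      = ((μ.1 (Sum.inr j) : ℂ) * sgnAt (Sum.inr j) μ.1 *
          sgnAt (Sum.inr i) (fun k => μ.1 k - (if k = Sum.inr j then 1 else 0))) •
        Finsupp.single μ' 1 := by
    rw [rho, Finsupp.linearCombination_single, one_smul, gAct_eq _ _ μ μ' hμ']
  have hRact : rho (Sum.inr j) (Sum.inr i) (Finsupp.single μ' 1)
      = ((μ'.1 (Sum.inr i) : ℂ) * sgnAt (Sum.inr i) μ'.1 *
          sgnAt (Sum.inr j) (fun k => μ'.1 k - (if k = Sum.inr i then 1 else 0))) •
        Finsupp.single μ 1 := by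
    rw [rho, Finsupp.linearCombination_single, one_smul, gAct_eq _ _ μ' μ hR]
  rw [hLact, hRact, form_smul_single, form_single_smul, hj, hii]
  have hs1 : sgnAt (Sum.inr i) μ'.1
      = sgnAt (Sum.inr i) (fun k => μ.1 k - (if k = Sum.inr j then 1 else 0)) := by
    simp only [sgnAt]
    congr 1
    apply Finset.sum_congr rfl
    intro l hl
    simp only [Finset.mem_filter, Finset.mem_univ, true_and] at hl
    have hli : (Sum.inr l : Idx m n) ≠ Sum.inr i :=
      fun h => absurd (Sum.inr.inj h) (ne_of_lt hl)
    rw [hμ' (Sum.inr l)]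
    simp [hli]
  have hs2 : sgnAt (Sum.inr j) (fun k => μ'.1 k - (if k = Sum.inr i then 1 else 0))
      = sgnAt (Sum.inr j) μ.1 := by
    simp only [sgnAt]
    congr 1
    apply Finset.sum_congr rfl
    intro l hl
    simp only [Finset.mem_filter, Finset.mem_univ, true_and] at hl
    by_cases hli : l = i
    · subst hli; simp [hii, hi]
    · have h1 : (Sum.inr l : Idx m n) ≠ Sum.inr i := fun h => hli (Sum.inr.inj h)
      have h2 : (Sum.inr l : Idx m n) ≠ Sum.inr j :=
        fun h => absurd (Sum.inr.inj h) (ne_of_lt hl)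
      rw [hμ' (Sum.inr l)]
      simp [h1, h2]
  rw [hs1, hs2]
  have hA : ∀ a : Fin (m+1), μ'.1 (Sum.inl a) = μ.1 (Sum.inl a) := by
    intro a; rw [hμ']; simp
  have hrest : ∀ b ∈ (Finset.univ.erase i).erase j, μ'.1 (Sum.inr b) = μ.1 (Sum.inr b) := by
    intro b hb
    simp only [Finset.mem_erase, Finset.mem_univ] at hb
    have h1 : (Sum.inr b : Idx m n) ≠ Sum.inr i := fun h => hb.2.1 (Sum.inr.inj h)
    have h2 : (Sum.inr b : Idx m n) ≠ Sum.inr j := fun h => hb.1 (Sum.inr.inj h)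
    rw [hμ']; simp [h1, h2]
  have hwt : wt pt qt θ κ μ' = qt j / qt i * wt pt qt θ κ μ := by
    unfold wt
    have e1 : (∏ a, ((μ'.1 (Sum.inl a)).factorial : ℂ))
        = ∏ a, ((μ.1 (Sum.inl a)).factorial : ℂ) :=
      Finset.prod_congr rfl fun a _ => by rw [hA a]
    have e2 : (∏ a, pt a ^ μ'.1 (Sum.inl a)) = ∏ a, pt a ^ μ.1 (Sum.inl a) :=
      Finset.prod_congr rfl fun a _ => by rw [hA a]
    have e3 : (∑ a, μ'.1 (Sum.inl a)) = ∑ a, μ.1 (Sum.inl a) :=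
      Finset.sum_congr rfl fun a _ => hA a
    have e4s : (∑ b ∈ (Finset.univ.erase i).erase j, μ'.1 (Sum.inr b))
        = ∑ b ∈ (Finset.univ.erase i).erase j, μ.1 (Sum.inr b) :=
      Finset.sum_congr rfl hrest
    have e4 : (∑ b, μ'.1 (Sum.inr b)) = ∑ b, μ.1 (Sum.inr b) := by
      rw [sum_split i j hij, sum_split i j hij, hii, hjj, hi, hj, e4s]
      omega
    have e5 : (∏ b ∈ (Finset.univ.erase i).erase j, qt b ^ μ'.1 (Sum.inr b))
        = ∏ b ∈ (Finset.univ.erase i).erase j, qt b ^ μ.1 (Sum.inr b) :=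
      Finset.prod_congr rfl fun b hb => by rw [hrest b hb]
    rw [e1, e2, e3, e4]
    rw [prod_split i j hij (fun b => qt b ^ μ'.1 (Sum.inr b)),
      prod_split i j hij (fun b => qt b ^ μ.1 (Sum.inr b)), hii, hjj, hi, hj, e5]
    simp only [pow_one, pow_zero, one_mul]
    exact final_step _ _ _ _ _ _ _ (hqt i) (hqt j)
  rw [hwt]
  push_cast
  ring
end

section
/- (Orthogonality of the transformed odd basis) Let q, q̃ ∈ (ℂ^×)^{n+1} with q₀ = q̃₀, V an (n+1)×(n+1) matrix with diag(q) V diag(q̃) Vᵗ = q₀ I, and κ, κ̃ ∈ ℂ^× with κκ̃ = q₀⁻¹. Define ξ̃ᵢ := κ̃ Σ_k q̃_k v_{i,k} ξ_k in the exterior algebra Λ[ξ₀,...,ξ_n], and define the bilinear form by ⟨ξ^ε, ξ^η⟩ := δ_{ε,η} κ^{|ε|}/q̃^ε on normal-ordered monomials. Then ⟨ξ̃^ε, ξ̃^η⟩ = δ_{ε,η} κ̃^{|ε|}/q^ε for all ε, η ∈ {0,1}^{n+1}. -/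
/-!
Let `g(u, v) = Σⱼ (κ / q̃ⱼ) uⱼ vⱼ` on `ℂ^{n+1}`. Extend `g` to the exterior algebra by
`⟨x, y⟩ = constant term of D(x) y`, where `D` is the algebra anti-homomorphism sending `v` to the
contraction `g(v, ·)⌋`. Then `⟨v ∧ x, y⟩ = ⟨x, g(v, ·)⌋y⟩`, and peeling off one factor at a time
shows that the ordered monomials of any `g`-orthogonal family `(uᵢ)` are orthogonal, with
`⟨u^S, u^S⟩ = ∏_{i ∈ S} g(uᵢ, uᵢ)`. The basis `ξ` is such a family with weights `κ / q̃ⱼ`, so this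
form is the one of the statement; the relation `diag(q) V diag(q̃) Vᵀ = q₀ I` together with
`κ κ̃ = q₀⁻¹` says exactly that the `ξ̃ᵢ` form one as well, with weights `κ̃ / qᵢ`.
-/

open Matrix

/-- The generator `ξⱼ` of the exterior algebra `Λ[ξ₀,…,ξ_n]` over `ℂ`. -/
noncomputable def xiV (n : ℕ) (j : Fin (n+1)) : ExteriorAlgebra ℂ (Fin (n+1) → ℂ) :=
  ExteriorAlgebra.ι ℂ (Pi.single j 1)

/-- The ordered monomial `ξ^ε` for a subset encoding `ε ∈ {0,1}^{n+1}`. -/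
noncomputable def xiProd (n : ℕ) (J : Finset (Fin (n+1))) :
    ExteriorAlgebra ℂ (Fin (n+1) → ℂ) :=
  ((J.sort (· ≤ ·)).map (xiV n)).prod

/-- The transformed variable `ξ̃ᵢ = κ̃ Σ_k q̃_k v_{i,k} ξ_k`. -/
noncomputable def xitV (n : ℕ) (κt : ℂ) (qt : Fin (n+1) → ℂ)
    (V : Matrix (Fin (n+1)) (Fin (n+1)) ℂ) (i : Fin (n+1)) :
    ExteriorAlgebra ℂ (Fin (n+1) → ℂ) :=
  κt • ∑ k, (qt k * V i k) • xiV n k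

/-- The ordered monomial `ξ̃^ε`. -/
noncomputable def xitProd (n : ℕ) (κt : ℂ) (qt : Fin (n+1) → ℂ)
    (V : Matrix (Fin (n+1)) (Fin (n+1)) ℂ) (J : Finset (Fin (n+1))) :
    ExteriorAlgebra ℂ (Fin (n+1) → ℂ) :=
  ((J.sort (· ≤ ·)).map (xitV n κt qt V)).prod

open ExteriorAlgebra

namespace CliffordAlgebra

variable {R M I : Type*} [CommRing R] [AddCommGroup M] [Module R M] {Q : QuadraticForm R M}

theorem contractLeft_prod_map_ι_eq_zero (d : Module.Dual R M) (u : I → M) (l : List I)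
    (h : ∀ a ∈ l, d (u a) = 0) :
    contractLeft d (l.map fun a => ι Q (u a)).prod = 0 := by
  induction l with
  | nil => exact contractLeft_one Q d
  | cons a l ih =>
    rw [List.map_cons, List.prod_cons, contractLeft_ι_mul, h a List.mem_cons_self,
      ih fun b hb => h b (List.mem_cons_of_mem a hb), zero_smul, mul_zero, sub_zero]

theorem contractLeft_prod_map_ι_eq_smul_erase [DecidableEq I] (d : Module.Dual R M) (u : I → M)
    (i : I) (c : R) (l : List I) (hl : l.Nodup) (hi : i ∈ l)
    (h : ∀ a ∈ l, d (u a) = if i = a then c else 0) :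
    contractLeft d (l.map fun a => ι Q (u a)).prod
      = ((-1) ^ l.idxOf i * c) • ((l.erase i).map fun a => ι Q (u a)).prod := by
  induction l with
  | nil => simp at hi
  | cons a l ih =>
    obtain ⟨hal, hl⟩ := List.nodup_cons.mp hl
    rw [List.map_cons, List.prod_cons, contractLeft_ι_mul]
    rcases eq_or_ne i a with rfl | hia
    · rw [h i List.mem_cons_self, if_pos rfl, contractLeft_prod_map_ι_eq_zero d u l fun b hb => by
          rw [h b (List.mem_cons_of_mem i hb), if_neg (ne_of_mem_of_not_mem hb hal).symm],
        mul_zero, sub_zero, List.idxOf_cons_self, List.erase_cons_head, pow_zero, one_mul]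
    · rw [h a List.mem_cons_self, if_neg hia, zero_smul, zero_sub,
        ih hl ((List.mem_cons.mp hi).resolve_left hia) fun b hb => h b (List.mem_cons_of_mem a hb),
        List.idxOf_cons_ne _ (Ne.symm hia), List.erase_cons_tail (by simpa using Ne.symm hia),
        List.map_cons, List.prod_cons, mul_smul_comm, ← neg_smul, pow_succ]
      congr 1
      ring

end CliffordAlgebra

theorem ExteriorAlgebra.algebraMapInv_ι {R M : Type*} [CommRing R] [AddCommGroup M] [Module R M]
    (m : M) : algebraMapInv (ι R m) = 0 :=
  lift_ι_apply R (f := 0) _ m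

namespace LinearMap.BilinForm

variable {R M I : Type*} [CommRing R] [AddCommGroup M] [Module R M]

/-- Contraction is composed in the opposite algebra so that the leftmost factor of `x` is
contracted first; this is what makes `exteriorPairing_ι_mul` hold. -/
noncomputable def exteriorContract (g : LinearMap.BilinForm R M) :
    ExteriorAlgebra R M →ₐ[R] (Module.End R (ExteriorAlgebra R M))ᵐᵒᵖ :=
  ExteriorAlgebra.lift R
    ⟨(MulOpposite.opLinearEquiv R).toLinearMap ∘ₗ CliffordAlgebra.contractLeft (Q := 0) ∘ₗ g,
      fun v => MulOpposite.unop_injective <| LinearMap.ext fun x =>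
        CliffordAlgebra.contractLeft_contractLeft (g v) x⟩

noncomputable def exteriorPairing (g : LinearMap.BilinForm R M) :
    ExteriorAlgebra R M →ₗ[R] ExteriorAlgebra R M →ₗ[R] R :=
  LinearMap.llcomp R _ _ _ (algebraMapInv (R := R) (M := M)).toLinearMap ∘ₗ
    (MulOpposite.opLinearEquiv R).symm.toLinearMap ∘ₗ (exteriorContract g).toLinearMap

variable (g : LinearMap.BilinForm R M)

theorem exteriorPairing_one_left (y : ExteriorAlgebra R M) :
    g.exteriorPairing 1 y = algebraMapInv y := by
  simp [exteriorPairing]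

theorem exteriorPairing_ι_mul (v : M) (x y : ExteriorAlgebra R M) :
    g.exteriorPairing (ι R v * x) y
      = g.exteriorPairing x (CliffordAlgebra.contractLeft (Q := 0) (g v) y) := by
  simp [exteriorPairing, exteriorContract]

theorem exteriorPairing_list_prod_ι_of_orthogonal [LinearOrder I] (u : I → M) (w : I → R)
    (hg : ∀ a b, g (u a) (u b) = if a = b then w a else 0) :
    ∀ l₁ l₂ : List I, l₁.Pairwise (· < ·) → l₂.Pairwise (· < ·) →
      g.exteriorPairing (l₁.map fun a => ι R (u a)).prod (l₂.map fun a => ι R (u a)).prod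
        = if l₁ = l₂ then (l₁.map w).prod else 0
  | [], [], _, _ => by simp [exteriorPairing_one_left]
  | [], a :: l₂, _, _ => by simp [exteriorPairing_one_left, algebraMapInv_ι]
  | e :: l₁, l₂, h₁, h₂ => by
    have hl₁ := (List.pairwise_cons.mp h₁).2
    rw [List.map_cons, List.prod_cons, exteriorPairing_ι_mul]
    by_cases hel₂ : e ∈ l₂
    · rw [CliffordAlgebra.contractLeft_prod_map_ι_eq_smul_erase (g (u e)) u e (w e) l₂ h₂.nodup
        hel₂ fun a _ => hg e a, map_smul, exteriorPairing_list_prod_ι_of_orthogonal u w hg l₁ _ hl₁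
        (h₂.sublist List.erase_sublist)]
      by_cases hl : l₁ = l₂.erase e
      · obtain rfl : e :: l₁ = l₂ :=
          (hl ▸ (List.perm_cons_erase hel₂).symm).eq_of_pairwise' h₁ h₂
        simp
      · rw [if_neg hl, if_neg (by rintro rfl; simp at hl), smul_zero]
    · rw [CliffordAlgebra.contractLeft_prod_map_ι_eq_zero (g (u e)) u l₂ fun a ha => by
          rw [hg, if_neg (ne_of_mem_of_not_mem ha hel₂).symm], map_zero,
        if_neg (by rintro rfl; exact hel₂ List.mem_cons_self)]

theorem exteriorPairing_sort_prod_ι_of_orthogonal [LinearOrder I] (u : I → M) (w : I → R)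
    (hg : ∀ a b, g (u a) (u b) = if a = b then w a else 0) (S T : Finset I) :
    g.exteriorPairing ((S.sort (· ≤ ·)).map fun a => ι R (u a)).prod
        ((T.sort (· ≤ ·)).map fun a => ι R (u a)).prod
      = if S = T then ∏ a ∈ S, w a else 0 := by
  classical
  rw [exteriorPairing_list_prod_ι_of_orthogonal g u w hg _ _ S.sortedLT_sort.pairwise
    T.sortedLT_sort.pairwise, ← List.prod_toFinset _ (S.sort_nodup _), Finset.sort_toFinset]
  congr 1
  exact propext ⟨fun h => by rw [← S.sort_toFinset (· ≤ ·), h, Finset.sort_toFinset],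
    fun h => h ▸ rfl⟩

end LinearMap.BilinForm

theorem Matrix.eq_diagonal_of_diagonal_mul_eq_smul_one {K n : Type*} [Field K] [Fintype n]
    [DecidableEq n] {d : n → K} (hd : ∀ i, d i ≠ 0) {A : Matrix n n K} {c : K}
    (h : diagonal d * A = c • 1) : A = diagonal fun i => c / d i := by
  ext i j
  have hij := congr_fun₂ h i j
  rw [diagonal_mul, smul_apply, one_apply, smul_eq_mul] at hij
  rw [diagonal_apply]
  rcases eq_or_ne i j with rfl | hne
  · rw [if_pos rfl, mul_one] at hij
    rw [if_pos rfl, eq_div_iff (hd i), mul_comm, hij]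
  · rw [if_neg hne, mul_zero] at hij
    rw [if_neg hne]
    exact (mul_eq_zero.mp hij).resolve_left (hd i)

theorem Matrix.toBilin'_diagonal_div_smul_rows {K n : Type*} [Field K] [Fintype n]
    [DecidableEq n] (q qt : n → K) (hq : ∀ i, q i ≠ 0) (hqt : ∀ i, qt i ≠ 0) (c κ κt : K)
    (hκ : κ * κt * c = 1) (V : Matrix n n K) (hV : diagonal q * V * diagonal qt * Vᵀ = c • 1)
    (a b : n) :
    toBilin' (diagonal fun j => κ / qt j) (κt • fun k => qt k * V a k) (κt • fun k => qt k * V b k)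
      = if a = b then κt / q a else 0 := by
  have hV' := eq_diagonal_of_diagonal_mul_eq_smul_one hq
    (A := V * diagonal qt * Vᵀ) (by rwa [← Matrix.mul_assoc, ← Matrix.mul_assoc])
  have hab := congr_fun₂ hV' a b
  rw [mul_apply] at hab
  simp only [mul_diagonal, transpose_apply, diagonal_apply] at hab
  calc toBilin' (diagonal fun j => κ / qt j) (κt • fun k => qt k * V a k)
        (κt • fun k => qt k * V b k)
      = κ * κt * κt * ∑ k, V a k * qt k * V b k := by
        simp only [toBilin'_apply', dotProduct, mulVec_diagonal, Pi.smul_apply, smul_eq_mul,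
          Finset.mul_sum]
        refine Finset.sum_congr rfl fun k _ => ?_
        field_simp [hqt k]
    _ = if a = b then κt / q a else 0 := by
        rw [hab]
        split_ifs with h
        · field_simp [hq a]
          linear_combination κt * hκ
        · rw [mul_zero]

theorem xitV_eq (n : ℕ) (κt : ℂ) (qt : Fin (n+1) → ℂ) (V : Matrix (Fin (n+1)) (Fin (n+1)) ℂ) :
    xitV n κt qt V = fun i => ι ℂ (κt • fun k => qt k * V i k) := by
  ext1 i
  rw [xitV, ← Finset.univ_sum_single (fun k => qt k * V i k), map_smul, map_sum]
  simp only [xiV, ← map_smul, ← Pi.single_smul', smul_eq_mul, mul_one]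

/-- The bilinear form is encoded through expansions in the monomial basis: `hc` and `hc'` expand
`ξ̃^E` and `ξ̃^H`, and the left-hand side is the pairing of these expansions. Subsets of
`{0,…,n}` encode `ε ∈ {0,1}^{n+1}`. -/
theorem odd_form_orthogonality_general (n : ℕ)
    (q qt : Fin (n+1) → ℂ) (hq : ∀ i, q i ≠ 0) (hqt : ∀ i, qt i ≠ 0)
    (κ κt : ℂ) (hκ : κ * κt = (q 0)⁻¹)
    (V : Matrix (Fin (n+1)) (Fin (n+1)) ℂ)
    (hV : diagonal q * V * diagonal qt * Vᵀ
        = q 0 • (1 : Matrix (Fin (n+1)) (Fin (n+1)) ℂ))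
    (E H : Finset (Fin (n+1))) (c c' : Finset (Fin (n+1)) → ℂ)
    (hc : xitProd n κt qt V E = ∑ S : Finset (Fin (n+1)), c S • xiProd n S)
    (hc' : xitProd n κt qt V H = ∑ S : Finset (Fin (n+1)), c' S • xiProd n S) :
    ∑ S : Finset (Fin (n+1)), c S * c' S * (κ ^ S.card / ∏ j ∈ S, qt j)
      = if E = H then κt ^ E.card / ∏ j ∈ E, q j else 0 := by
  set g : LinearMap.BilinForm ℂ (Fin (n+1) → ℂ) := toBilin' (diagonal fun j => κ / qt j)
  have hξ : ∀ S T, g.exteriorPairing (xiProd n S) (xiProd n T)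
      = if S = T then κ ^ S.card / ∏ j ∈ S, qt j else 0 := fun S T => by
    rw [← Finset.prod_const, ← Finset.prod_div_distrib]
    exact g.exteriorPairing_sort_prod_ι_of_orthogonal (fun j => Pi.single j 1) (fun j => κ / qt j)
      (by simp [g, diagonal_apply]) S T
  have hξt : ∀ E H, g.exteriorPairing (xitProd n κt qt V E) (xitProd n κt qt V H)
      = if E = H then κt ^ E.card / ∏ j ∈ E, q j else 0 := fun E H => by
    rw [← Finset.prod_const, ← Finset.prod_div_distrib, xitProd, xitProd, xitV_eq]
    exact g.exteriorPairing_sort_prod_ι_of_orthogonal (fun i => κt • fun k => qt k * V i k)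
      (fun i => κt / q i) (toBilin'_diagonal_div_smul_rows q qt hq hqt (q 0) κ κt
        (by rw [hκ, inv_mul_cancel₀ (hq 0)]) V hV) E H
  calc ∑ S, c S * c' S * (κ ^ S.card / ∏ j ∈ S, qt j)
      = g.exteriorPairing (∑ S, c S • xiProd n S) (∑ S, c' S • xiProd n S) := by
        simp only [map_sum, map_smul, LinearMap.coe_sum, LinearMap.coe_smul, Finset.sum_apply,
          Pi.smul_apply, hξ, smul_eq_mul, mul_ite, mul_zero, Finset.sum_ite_eq', Finset.mem_univ,
          if_true]
        exact Finset.sum_congr rfl fun S _ => by ring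
    _ = if E = H then κt ^ E.card / ∏ j ∈ E, q j else 0 := by rw [← hc, ← hc', hξt]

/-- Orthogonality of the transformed odd basis: if the bilinear form is given on
monomials by `⟨ξ^ε, ξ^η⟩ = δ_{ε,η} κ^{|ε|}/q̃^ε` (so that the pairing of two
elements expanded in monomials as `Σ c_S ξ^S`, `Σ c'_S ξ^S` equals
`Σ_S c_S c'_S κ^{|S|}/q̃^S`), then `⟨ξ̃^ε, ξ̃^η⟩ = δ_{ε,η} κ̃^{|ε|}/q^ε`.
Subsets of `{0,…,n}` encode elements of `{0,1}^{n+1}`. -/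
theorem odd_form_orthogonality (n : ℕ)
    (q qt : Fin (n+1) → ℂ) (hq : ∀ i, q i ≠ 0) (hqt : ∀ i, qt i ≠ 0)
    (h0 : q 0 = qt 0) (κ κt : ℂ) (hκ : κ * κt = (q 0)⁻¹)
    (V : Matrix (Fin (n+1)) (Fin (n+1)) ℂ)
    (hV : diagonal q * V * diagonal qt * Vᵀ
        = q 0 • (1 : Matrix (Fin (n+1)) (Fin (n+1)) ℂ))
    (E H : Finset (Fin (n+1))) (c c' : Finset (Fin (n+1)) → ℂ)
    (hc : xitProd n κt qt V E = ∑ S : Finset (Fin (n+1)), c S • xiProd n S)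
    (hc' : xitProd n κt qt V H = ∑ S : Finset (Fin (n+1)), c' S • xiProd n S) :
    ∑ S : Finset (Fin (n+1)), c S * c' S * (κ ^ S.card / ∏ j ∈ S, qt j)
      = if E = H then κt ^ E.card / ∏ j ∈ E, q j else 0 :=
  odd_form_orthogonality_general n q qt hq hqt κ κt hκ V hV E H c c' hc hc'
end

section
/- (Odd transition formula) With data as in the orthogonality setup, for ε̃ ∈ {0,1}^{n+1} with |ε̃| = d: ξ̃^{ε̃} = κ̃^d d! Σ_{|ε|=d} 𝒫₁(ε, ε̃) q̃^ε ξ^ε, where 𝒫₁(ε, ε̃) := (1/d!)·det(V_{I,J}) with I = {i : ε̃ᵢ = 1}, J = {j : εⱼ = 1}. -/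
open Matrix

/-- Determinant of the `d×d` submatrix of `V` with rows `I`, columns `J`. -/
noncomputable def mdet {n : ℕ} (d : ℕ) (V : Matrix (Fin (n+1)) (Fin (n+1)) ℂ)
    (I J : Finset (Fin (n+1))) : ℂ :=
  Matrix.det (Matrix.of fun a b : Fin d =>
    V ((I.sort (· ≤ ·)).getD a 0) ((J.sort (· ≤ ·)).getD b 0))

private lemma sort_map_eq_ofFn {α β : Type*} [LinearOrder α] (J : Finset α) {e : ℕ}
    (h : J.card = e) (f : α → β) :
    (J.sort (· ≤ ·)).map f = List.ofFn (fun a : Fin e => f (J.orderEmbOfFin h a)) := by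
  apply List.ext_getElem
  · simp [h]
  · intro i h1 h2
    simp [Finset.orderEmbOfFin_apply]

private lemma xiProd_eq_iMulti (n d : ℕ) (E : Finset (Fin (n+1))) (h : E.card = d) :
    xiProd n E = ExteriorAlgebra.ιMulti ℂ d
      (fun a => (Pi.single (E.orderEmbOfFin h a) 1 : Fin (n+1) → ℂ)) := by
  rw [xiProd, sort_map_eq_ofFn E h, ExteriorAlgebra.ιMulti_apply]
  rfl

private lemma single_injective (n : ℕ) :
    Function.Injective (fun k : Fin (n+1) => (Pi.single k 1 : Fin (n+1) → ℂ)) := by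
  intro k l h
  by_contra hne
  have h1 : (Pi.single k 1 : Fin (n+1) → ℂ) k = (Pi.single l 1 : Fin (n+1) → ℂ) k :=
    congrFun h k
  rw [Pi.single_eq_same, Pi.single_eq_of_ne hne] at h1
  exact one_ne_zero h1

private lemma image_orderEmbOfFin {α : Type*} [LinearOrder α] (E : Finset α) {d : ℕ}
    (h : E.card = d) : Finset.image (E.orderEmbOfFin h) Finset.univ = E := by
  apply Finset.coe_injective
  rw [Finset.coe_image, Finset.coe_univ, Set.image_univ, Finset.range_orderEmbOfFin]

/-- The permutation relating an injective function `r : Fin d → α` with image `E`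
to the monotone enumeration of `E`. -/
private noncomputable def permOfInj {α : Type*} [LinearOrder α] (E : Finset α) {d : ℕ}
    (hE : E.card = d) (r : Fin d → α) (hrinj : Function.Injective r)
    (hmem : ∀ a, r a ∈ E) : Equiv.Perm (Fin d) :=
  Equiv.ofBijective (fun a => (E.orderIsoOfFin hE).symm ⟨r a, hmem a⟩)
    (Finite.injective_iff_bijective.1 (fun a b hab =>
      hrinj (congrArg Subtype.val ((E.orderIsoOfFin hE).symm.injective hab))))

private lemma permOfInj_spec {α : Type*} [LinearOrder α] (E : Finset α) {d : ℕ}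
    (hE : E.card = d) (r : Fin d → α) (hrinj : Function.Injective r)
    (hmem : ∀ a, r a ∈ E) (a : Fin d) :
    E.orderEmbOfFin hE (permOfInj E hE r hrinj hmem a) = r a := by
  show ((E.orderIsoOfFin hE) ((E.orderIsoOfFin hE).symm ⟨r a, hmem a⟩) : α) = r a
  rw [OrderIso.apply_symm_apply]

/-- Odd transition formula: `ξ̃^{ε̃} = κ̃^d d! Σ_{|ε|=d} 𝒫₁(ε,ε̃) q̃^ε ξ^ε`, with
`𝒫₁(ε,ε̃) = (1/d!) det(V_{I(ε̃),J(ε)})`; subsets encode binary vectors. -/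
theorem odd_transition (n d : ℕ) (hd : d ≤ n + 1)
    (q qt : Fin (n+1) → ℂ) (hq : ∀ i, q i ≠ 0) (hqt : ∀ i, qt i ≠ 0)
    (h0 : q 0 = qt 0) (κ κt : ℂ) (hκ : κ * κt = (q 0)⁻¹)
    (V : Matrix (Fin (n+1)) (Fin (n+1)) ℂ)
    (hV : diagonal q * V * diagonal qt * Vᵀ
        = q 0 • (1 : Matrix (Fin (n+1)) (Fin (n+1)) ℂ))
    (Et : Finset (Fin (n+1))) (hEt : Et.card = d) :
    xitProd n κt qt V Et
      = ∑ E ∈ Finset.powersetCard d Finset.univ,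
          (κt ^ d * (d.factorial : ℂ) *
            ((1 / (d.factorial : ℂ)) * mdet d V Et E) * ∏ j ∈ E, qt j) •
            xiProd n E := by
  classical
  -- simplify the coefficient on the RHS
  have hfac : (d.factorial : ℂ) ≠ 0 := Nat.cast_ne_zero.2 d.factorial_ne_zero
  have hcoeff : ∀ E : Finset (Fin (n+1)),
      κt ^ d * (d.factorial : ℂ) * ((1 / (d.factorial : ℂ)) * mdet d V Et E) * ∏ j ∈ E, qt j
        = (κt ^ d * (∏ j ∈ E, qt j)) * mdet d V Et E := by
    intro E; field_simp
  have hRHS : ∑ E ∈ Finset.powersetCard d Finset.univ,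
        (κt ^ d * (d.factorial : ℂ) *
          ((1 / (d.factorial : ℂ)) * mdet d V Et E) * ∏ j ∈ E, qt j) • xiProd n E
      = ∑ E ∈ Finset.powersetCard d Finset.univ,
          ((κt ^ d * (∏ j ∈ E, qt j)) * mdet d V Et E) • xiProd n E :=
    Finset.sum_congr rfl fun E _ => by rw [hcoeff]
  rw [hRHS]
  -- notation
  set e : Fin (n+1) → (Fin (n+1) → ℂ) := fun k => Pi.single k 1 with he
  have einj : Function.Injective e := single_injective n
  set t : Fin d → Fin (n+1) := fun a => Et.orderEmbOfFin hEt a with ht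
  set c : Fin d → Fin (n+1) → ℂ := fun a k => κt * (qt k * V (t a) k) with hc
  -- LHS as an `ιMulti`
  have hL : xitProd n κt qt V Et
      = ExteriorAlgebra.ιMulti ℂ d (fun a => ∑ k, c a k • e k) := by
    rw [xitProd, sort_map_eq_ofFn Et hEt, ExteriorAlgebra.ιMulti_apply]
    congr 1
    apply congrArg
    funext a
    show xitV n κt qt V (t a) = ExteriorAlgebra.ι ℂ (∑ k, c a k • e k)
    rw [map_sum]
    rw [xitV, Finset.smul_sum]
    refine Finset.sum_congr rfl fun k _ => ?_
    rw [LinearMap.map_smul]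
    simp only [hc, he, smul_smul]
    rfl
  rw [hL]
  -- multilinear expansion
  have hexp : ExteriorAlgebra.ιMulti ℂ d (fun a => ∑ k, c a k • e k)
      = ∑ r : Fin d → Fin (n+1),
          (∏ a, c a (r a)) • ExteriorAlgebra.ιMulti ℂ d (e ∘ r) := by
    have h1 : (ExteriorAlgebra.ιMulti ℂ d (M := Fin (n+1) → ℂ))
          (fun a => ∑ k, c a k • e k)
        = (ExteriorAlgebra.ιMulti ℂ d (M := Fin (n+1) → ℂ)).toMultilinearMap
          (fun a => ∑ k, c a k • e k) := rfl
    rw [h1, MultilinearMap.map_sum]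
    refine Finset.sum_congr rfl fun r _ => ?_
    show (ExteriorAlgebra.ιMulti ℂ d (M := Fin (n+1) → ℂ)).toMultilinearMap
        (fun i => c i (r i) • e (r i))
      = (∏ a, c a (r a)) •
        (ExteriorAlgebra.ιMulti ℂ d (M := Fin (n+1) → ℂ)).toMultilinearMap (e ∘ r)
    rw [MultilinearMap.map_smul_univ]
    rfl
  rw [hexp]
  -- non-injective terms vanish
  have hinj : ∑ r : Fin d → Fin (n+1),
        (∏ a, c a (r a)) • ExteriorAlgebra.ιMulti ℂ d (e ∘ r)
      = ∑ r ∈ Finset.univ.filter (fun r : Fin d → Fin (n+1) => Function.Injective r),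
        (∏ a, c a (r a)) • ExteriorAlgebra.ιMulti ℂ d (e ∘ r) := by
    symm
    apply Finset.sum_filter_of_ne
    intro r _ hne
    by_contra hr
    apply hne
    rw [AlternatingMap.map_eq_zero_of_not_injective _ _
      (fun hcomp => hr (Function.Injective.of_comp (f := e) hcomp)), smul_zero]
  rw [hinj]
  -- fiberwise over the image
  rw [← Finset.sum_fiberwise_of_maps_to
      (g := fun r : Fin d → Fin (n+1) => Finset.image r Finset.univ)
      (t := Finset.powersetCard d Finset.univ)
      (fun r hr => by
        rw [Finset.mem_powersetCard]
        refine ⟨Finset.subset_univ _, ?_⟩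
        rw [Finset.card_image_of_injective _ (Finset.mem_filter.1 hr).2]
        simp)]
  refine Finset.sum_congr rfl fun E hEmem => ?_
  have hE : E.card = d := (Finset.mem_powersetCard.1 hEmem).2
  set u : Fin d → Fin (n+1) := fun a => E.orderEmbOfFin hE a with hu
  have uinj : Function.Injective u := (E.orderEmbOfFin hE).injective
  have huE : Finset.image u Finset.univ = E := by
    apply Finset.coe_injective
    rw [Finset.coe_image, Finset.coe_univ, Set.image_univ]
    exact Finset.range_orderEmbOfFin E hE
  -- the fiber is parametrized by permutations
  have hfiber : ∑ r ∈ (Finset.univ.filter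
          (fun r : Fin d → Fin (n+1) => Function.Injective r)).filter
          (fun r => Finset.image r Finset.univ = E),
        (∏ a, c a (r a)) • ExteriorAlgebra.ιMulti ℂ d (e ∘ r)
      = ∑ σ : Equiv.Perm (Fin d),
        (∏ a, c a (u (σ a))) • ExteriorAlgebra.ιMulti ℂ d (e ∘ (u ∘ σ)) := by
    refine Finset.sum_bij'
      (i := fun r hr => permOfInj E hE r
        (Finset.mem_filter.1 (Finset.mem_filter.1 hr).1).2
        (fun a => (Finset.mem_filter.1 hr).2 ▸
          Finset.mem_image_of_mem r (Finset.mem_univ a)))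
      (j := fun σ _ => u ∘ σ) (fun r hr => Finset.mem_univ _) ?_ ?_ ?_ ?_
    · -- j maps into the fiber
      intro σ _
      refine Finset.mem_filter.2 ⟨Finset.mem_filter.2 ⟨Finset.mem_univ _,
        uinj.comp σ.injective⟩, ?_⟩
      rw [← Finset.image_image, Finset.image_univ_equiv, huE]
    · -- left inverse : u ∘ σ_r = r
      intro r hr
      funext a
      exact permOfInj_spec E hE r _ _ a
    · -- right inverse : σ_{u∘σ} = σ
      intro σ _
      refine Equiv.ext fun a => ?_
      show permOfInj E hE (u ∘ σ) _ _ a = σ a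
      exact uinj (permOfInj_spec E hE (u ∘ σ) _ _ a)
    · -- summand equality
      intro r hr
      have key : ∀ (σ : Equiv.Perm (Fin d)) (r : Fin d → Fin (n+1)), u ∘ σ = r →
          (∏ a, c a (r a)) • ExteriorAlgebra.ιMulti ℂ d (e ∘ r)
            = (∏ a, c a (u (σ a))) • ExteriorAlgebra.ιMulti ℂ d (e ∘ (u ∘ σ)) := by
        rintro σ r rfl
        rfl
      exact key _ r (funext fun a => permOfInj_spec E hE r _ _ a)
  rw [hfiber]
  -- evaluate the permutation sum as a determinant
  have hperm : ∀ σ : Equiv.Perm (Fin d),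
      ExteriorAlgebra.ιMulti ℂ d (e ∘ (u ∘ σ))
        = ((Equiv.Perm.sign σ : ℤ) : ℂ) • ExteriorAlgebra.ιMulti ℂ d (e ∘ u) := by
    intro σ
    have h1 : e ∘ (u ∘ σ) = (e ∘ u) ∘ σ := rfl
    rw [h1, AlternatingMap.map_perm, Units.smul_def, Int.cast_smul_eq_zsmul]
  have hqtprod : ∀ σ : Equiv.Perm (Fin d), (∏ a, qt (u (σ a))) = ∏ j ∈ E, qt j := by
    intro σ
    rw [Equiv.prod_comp σ (fun a => qt (u a)), ← huE,
      Finset.prod_image (fun x _ y _ h => uinj h)]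
  have hcprod : ∀ σ : Equiv.Perm (Fin d),
      (∏ a, c a (u (σ a)))
        = κt ^ d * (∏ j ∈ E, qt j) * ∏ a, V (t a) (u (σ a)) := by
    intro σ
    simp only [hc]
    rw [Finset.prod_mul_distrib, Finset.prod_mul_distrib, Finset.prod_const,
      Finset.card_univ, Fintype.card_fin, hqtprod σ, mul_assoc]
  have hdet : mdet d V Et E
      = ∑ σ : Equiv.Perm (Fin d),
          ((Equiv.Perm.sign σ : ℤ) : ℂ) * ∏ a, V (t a) (u (σ a)) := by
    rw [mdet]
    rw [show (Matrix.of fun a b : Fin d =>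
        V ((Et.sort (· ≤ ·)).getD a 0) ((E.sort (· ≤ ·)).getD b 0))
      = (Matrix.of fun a b : Fin d => V (t b) (u a))ᵀ by
        ext a b
        simp only [Matrix.transpose_apply, Matrix.of_apply]
        congr 1
        · rw [List.getD_eq_getElem _ _ (by
            rw [Finset.length_sort, hEt]; exact a.2)]
          rfl
        · rw [List.getD_eq_getElem _ _ (by
            rw [Finset.length_sort, hE]; exact b.2)]
          rfl]
    rw [Matrix.det_transpose, Matrix.det_apply']
    rfl
  calc ∑ σ : Equiv.Perm (Fin d),
        (∏ a, c a (u (σ a))) • ExteriorAlgebra.ιMulti ℂ d (e ∘ (u ∘ σ))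
      = ∑ σ : Equiv.Perm (Fin d),
        ((κt ^ d * (∏ j ∈ E, qt j)) *
          (((Equiv.Perm.sign σ : ℤ) : ℂ) * ∏ a, V (t a) (u (σ a)))) •
          ExteriorAlgebra.ιMulti ℂ d (e ∘ u) := by
        refine Finset.sum_congr rfl fun σ _ => ?_
        rw [hperm σ, hcprod σ, smul_smul]
        ring_nf
    _ = ((κt ^ d * (∏ j ∈ E, qt j)) * mdet d V Et E) •
          ExteriorAlgebra.ιMulti ℂ d (e ∘ u) := by
        rw [← Finset.sum_smul, ← Finset.mul_sum, hdet]
    _ = ((κt ^ d * (∏ j ∈ E, qt j)) * mdet d V Et E) • xiProd n E := by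
        rw [xiProd_eq_iMulti n d E hE]
        rfl
end
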